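/- Let X be a vector lattice with a cofinal family of projection bands. A system {x_γ} in X is d-independent in the band-free sense (for every band B: Σ c_j x_{γ_j} ⊥ B with nonzero c_j implies all x_{γ_j} ⊥ B) if and only if it is d-independent in the projection-band sense (for every projection band B, the nonzero projections P_B x_γ are linearly independent). -/

import Mathlib

/-- Disjointness in a vector lattice. -/
def disjt {X : Type*} [Lattice X] [AddCommGroup X] (x y : X) : Prop := |x| ⊓ |y| = 0

/-- Disjoint complement of a set. -/
def dComp {X : Type*} [Lattice X] [AddCommGroup X] (S : Set X) : Set X :=
  {x | ∀ y ∈ S, disjt x y}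

/-- A band (in an Archimedean vector lattice) is a disjoint complement. -/
def IsBand {X : Type*} [Lattice X] [AddCommGroup X] (B : Set X) : Prop :=
  ∃ S : Set X, B = dComp S

/-- A projection band. -/
def IsProjBand {X : Type*} [Lattice X] [AddCommGroup X] (B : Set X) : Prop :=
  IsBand B ∧ ∀ x : X, ∃ b ∈ B, ∃ c ∈ dComp B, x = b + c

/-- `P` is the band-projection onto the projection band `B`. -/
def IsBandProjOnto {X : Type*} [Lattice X] [AddCommGroup X] [Module ℝ X]
    (B : Set X) (P : X →ₗ[ℝ] X) : Prop :=
  IsProjBand B ∧ ∀ x : X, P x ∈ B ∧ x - P x ∈ dComp B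

/-- `P` is a band-projection. -/
def IsBandProj {X : Type*} [Lattice X] [AddCommGroup X] [Module ℝ X]
    (P : X →ₗ[ℝ] X) : Prop := ∃ B : Set X, IsBandProjOnto B P

/-- A band preserving operator. -/
def BandPreserving {X : Type*} [Lattice X] [AddCommGroup X] [Module ℝ X]
    (T : X →ₗ[ℝ] X) : Prop := ∀ x y : X, disjt x y → disjt (T x) y

/-- A cofinal family of projection bands. -/
def CofinalProjBands (X : Type*) [Lattice X] [AddCommGroup X] : Prop :=
  ∀ B : Set X, IsBand B → B ≠ {0} →
    ∃ B' : Set X, IsProjBand B' ∧ B' ≠ {0} ∧ B' ⊆ B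

/-- d-independence of a family (band-free sense). -/
def dIndepFam {X : Type*} [Lattice X] [AddCommGroup X] [Module ℝ X]
    {ι : Type*} (f : ι → X) : Prop :=
  ∀ B : Set X, IsBand B → ∀ (t : Finset ι) (c : ι → ℝ),
    (∀ j ∈ t, c j ≠ 0) → (∑ j ∈ t, c j • f j) ∈ dComp B → ∀ j ∈ t, f j ∈ dComp B

/-- d-independence of a set (band-free sense). -/
def dIndepSet {X : Type*} [Lattice X] [AddCommGroup X] [Module ℝ X]
    (s : Set X) : Prop := dIndepFam (fun x : s => (x : X))

/-- A full system of pairwise disjoint bands. -/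
def FullDisjBands {X : Type*} [Lattice X] [AddCommGroup X] (𝒞 : Set (Set X)) : Prop :=
  (∀ B ∈ 𝒞, IsBand B) ∧
  (∀ B ∈ 𝒞, ∀ B' ∈ 𝒞, B ≠ B' → ∀ a ∈ B, ∀ b ∈ B', disjt a b) ∧
  (∀ z : X, (∀ B ∈ 𝒞, z ∈ dComp B) → z = 0)

/-- A d-basis (band-free sense). -/
def IsDBasis {X : Type*} [Lattice X] [AddCommGroup X] [Module ℝ X]
    (s : Set X) : Prop :=
  dIndepSet s ∧ ∀ x : X, ∃ 𝒞 : Set (Set X), FullDisjBands 𝒞 ∧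
    ∀ B ∈ 𝒞, ∃ (t : Finset X) (c : X → ℝ), (↑t ⊆ s) ∧ (∀ e ∈ t, c e ≠ 0) ∧
      (x - ∑ e ∈ t, c e • e) ∈ dComp B

/-- `b` is a semi-component of `x`. -/
def IsSemiComponent {X : Type*} [Lattice X] [AddCommGroup X] [Module ℝ X]
    (x b : X) : Prop :=
  b ≠ 0 ∧ ∃ (𝒞 : Set (Set X)) (c : Set X → ℝ), FullDisjBands 𝒞 ∧
    ∀ B ∈ 𝒞, (b - c B • x) ∈ dComp B

/-- Condition (*): every band has a semi-component of every element not disjoint from it. -/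
def CondStar (X : Type*) [Lattice X] [AddCommGroup X] [Module ℝ X] : Prop :=
  ∀ B : Set X, IsBand B → ∀ x : X, x ∉ dComp B → ∃ b ∈ B, IsSemiComponent x b
/-- Projection-band-sense d-independence of a family. -/
def dIndepProjFam {X : Type*} [Lattice X] [AddCommGroup X] [Module ℝ X]
    {ι : Type*} (f : ι → X) : Prop :=
  ∀ (B : Set X) (P : X →ₗ[ℝ] X), IsBandProjOnto B P →
    ∀ (t : Finset ι) (c : ι → ℝ), (∑ j ∈ t, c j • P (f j)) = 0 →
      ∀ j ∈ t, P (f j) ≠ 0 → c j = 0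

/-- Projection-band-sense d-independence of a set. -/
def dIndepProjSet {X : Type*} [Lattice X] [AddCommGroup X] [Module ℝ X]
    (s : Set X) : Prop := dIndepProjFam (fun x : s => (x : X))

/-- Lateral completeness. -/
def LatComplete (X : Type*) [Lattice X] [AddCommGroup X] : Prop :=
  ∀ S : Set X, (∀ x ∈ S, 0 ≤ x) → S.Pairwise disjt → ∃ b : X, IsLUB S b

/-- Lateral completeness of a subset (sups taken relative to the subset). -/
def LatCompleteIn {X : Type*} [Lattice X] [AddCommGroup X] (X₀ : Set X) : Prop :=
  ∀ S : Set X, S ⊆ X₀ → (∀ x ∈ S, 0 ≤ x) → S.Pairwise disjt →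
    ∃ b ∈ X₀, b ∈ upperBounds S ∧ ∀ b' ∈ X₀, b' ∈ upperBounds S → b ≤ b'

/-- Dedekind completeness of a subset (sups relative to the subset). -/
def DedekindCompleteIn {X : Type*} [Lattice X] [AddCommGroup X] (X₀ : Set X) : Prop :=
  ∀ S : Set X, S ⊆ X₀ → S.Nonempty → (∃ u ∈ X₀, u ∈ upperBounds S) →
    ∃ b ∈ X₀, b ∈ upperBounds S ∧ ∀ b' ∈ X₀, b' ∈ upperBounds S → b ≤ b'

/-- Universal completeness of a subset. -/
def UnivCompleteIn {X : Type*} [Lattice X] [AddCommGroup X] (X₀ : Set X) : Prop :=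
  LatCompleteIn X₀ ∧ DedekindCompleteIn X₀

/-- Disjoint complement of `S` relative to the sublattice `X₀`. -/
def dCompIn {X : Type*} [Lattice X] [AddCommGroup X] (X₀ S : Set X) : Set X :=
  {x | x ∈ X₀ ∧ ∀ y ∈ S, disjt x y}

/-- Bands of the sublattice `X₀`. -/
def IsBandIn {X : Type*} [Lattice X] [AddCommGroup X] (X₀ B : Set X) : Prop :=
  ∃ S : Set X, S ⊆ X₀ ∧ B = dCompIn X₀ S

/-- Projection bands of the sublattice `X₀`. -/
def IsProjBandIn {X : Type*} [Lattice X] [AddCommGroup X] (X₀ B : Set X) : Prop :=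
  IsBandIn X₀ B ∧ ∀ x ∈ X₀, ∃ b ∈ B, ∃ c ∈ dCompIn X₀ B, x = b + c

/-- A band `B` is principally universally complete if each of its principal bands
is universally complete. -/
def PrincUnivCompleteIn {X : Type*} [Lattice X] [AddCommGroup X] (B : Set X) : Prop :=
  ∀ u ∈ B, UnivCompleteIn (dCompIn B (dCompIn B {u}))

/-- d-independence of a family relative to the sublattice `X₀`. -/
def dIndepFamIn {X : Type*} [Lattice X] [AddCommGroup X] [Module ℝ X]
    (X₀ : Set X) {ι : Type*} (f : ι → X) : Prop :=
  ∀ B : Set X, IsBandIn X₀ B → ∀ (t : Finset ι) (c : ι → ℝ),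
    (∀ j ∈ t, c j ≠ 0) → (∑ j ∈ t, c j • f j) ∈ dCompIn X₀ B →
      ∀ j ∈ t, f j ∈ dCompIn X₀ B

/-- A full system of pairwise disjoint bands of the sublattice `X₀`. -/
def FullDisjBandsIn {X : Type*} [Lattice X] [AddCommGroup X]
    (X₀ : Set X) (𝒞 : Set (Set X)) : Prop :=
  (∀ B ∈ 𝒞, IsBandIn X₀ B) ∧
  (∀ B ∈ 𝒞, ∀ B' ∈ 𝒞, B ≠ B' → ∀ a ∈ B, ∀ b ∈ B', disjt a b) ∧
  (∀ z ∈ X₀, (∀ B ∈ 𝒞, z ∈ dCompIn X₀ B) → z = 0)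

/-- A d-basis of the sublattice `X₀`. -/
def IsDBasisIn {X : Type*} [Lattice X] [AddCommGroup X] [Module ℝ X]
    (X₀ : Set X) (s : Set X) : Prop :=
  dIndepFamIn X₀ (fun x : s => (x : X)) ∧
  ∀ x ∈ X₀, ∃ 𝒞 : Set (Set X), FullDisjBandsIn X₀ 𝒞 ∧
    ∀ B ∈ 𝒞, ∃ (t : Finset X) (c : X → ℝ), (↑t ⊆ s) ∧ (∀ e ∈ t, c e ≠ 0) ∧
      (x - ∑ e ∈ t, c e • e) ∈ dCompIn X₀ B

/-- An essentially constant continuous function. -/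
def EssConst {K : Type*} [TopologicalSpace K] (f : C(K, ℝ)) : Prop :=
  ∀ G : Set K, IsOpen G → G.Nonempty →
    ∃ G₁ ⊆ G, IsOpen G₁ ∧ G₁.Nonempty ∧ ∃ c : ℝ, ∀ t ∈ G₁, f t = c


/-! A band projection `P_B` vanishes exactly on `Bᵈ`, so a vanishing combination of the `P_B x_j`
is the image of a combination of the `x_j` lying in `Bᵈ`; band-free d-independence then puts every
`x_j` with nonzero coefficient in `Bᵈ`, i.e. `P_B x_j = 0`.
Conversely, if `x_j` is not disjoint from a band `B`, then `u = |x_j| ⊓ |y| ≠ 0` for some `y ∈ B`,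
and cofinality gives a nonzero projection band `B'` inside the principal band `{u}ᵈᵈ ⊆ B`. As
`{u}ᵈ ∩ {u}ᵈᵈ = 0`, `x_j` is not disjoint from `B'`, so `P_{B'} x_j ≠ 0`, while `P_{B'}` kills the
combination, which lies in `Bᵈ ⊆ B'ᵈ`; hence the coefficient of `x_j` is `0`. -/

section Disjointness

variable {X : Type*} [Lattice X] [AddCommGroup X]

lemma disjt_comm {x y : X} : disjt x y ↔ disjt y x := by
  rw [disjt, disjt, inf_comm]

lemma dComp_antitone {S T : Set X} (h : S ⊆ T) : dComp T ⊆ dComp S :=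
  fun _ hx w hw => hx w (h hw)

lemma mem_dComp_dComp_self (u : X) : u ∈ dComp (dComp {u}) :=
  fun _ hw => disjt_comm.1 (hw u rfl)

lemma dComp_dComp_subset {B T : Set X} (hB : IsBand B) (hT : T ⊆ B) : dComp (dComp T) ⊆ B := by
  obtain ⟨S, rfl⟩ := hB
  exact fun z hz w hw => hz w fun v hv => disjt_comm.1 (hT hv w hw)

lemma neg_mem_dComp {S : Set X} {x : X} (hx : x ∈ dComp S) : -x ∈ dComp S :=
  fun w hw => by rw [disjt, abs_neg]; exact hx w hw

lemma abs_smul_le [Module ℝ X] [PosSMulMono ℝ X] (c : ℝ) (x : X) : |c • x| ≤ |c| • |x| := by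
  have key : ∀ c : ℝ, c • x ≤ |c| • |x| := fun c => by
    rcases le_total 0 c with hc | hc
    · rw [abs_of_nonneg hc]
      exact smul_le_smul_of_nonneg_left (le_abs_self x) hc
    · rw [abs_of_nonpos hc, ← neg_smul_neg]
      exact smul_le_smul_of_nonneg_left (neg_le_abs x) (neg_nonneg.2 hc)
  exact abs_le'.2 ⟨key c, by simpa using key (-c)⟩

variable [CovariantClass X X (· + ·) (· ≤ ·)]

lemma disjt_of_inf_le_zero {x y : X} (h : |x| ⊓ |y| ≤ 0) : disjt x y :=
  le_antisymm h (le_inf (abs_nonneg x) (abs_nonneg y))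

lemma disjt_of_abs_le {x y z : X} (h : |x| ≤ |y|) (hy : disjt y z) : disjt x z :=
  disjt_of_inf_le_zero (hy ▸ inf_le_inf_right _ h)

lemma eq_zero_of_disjt_self {x : X} (h : disjt x x) : x = 0 := by
  rw [disjt, inf_idem] at h
  exact le_antisymm (h ▸ le_abs_self x) (neg_nonpos.1 (h ▸ neg_le_abs x))

lemma eq_zero_of_mem_of_mem_dComp {S : Set X} {x : X} (hS : x ∈ S) (hx : x ∈ dComp S) : x = 0 :=
  eq_zero_of_disjt_self (hx x hS)

lemma add_inf_le_inf_add_inf {a b c : X} (ha : 0 ≤ a) (hb : 0 ≤ b) (hc : 0 ≤ c) :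
    (a + b) ⊓ c ≤ a ⊓ c + b ⊓ c := by
  have h : (a + b) ⊓ c ≤ a ⊓ c + b :=
    calc (a + b) ⊓ c ≤ (a + b) ⊓ (c + b) := inf_le_inf_left _ (le_add_of_nonneg_right hb)
      _ = a ⊓ c + b := (inf_add a c b).symm
  rw [add_inf]
  exact le_inf h (inf_le_right.trans (le_add_of_nonneg_left (le_inf ha hc)))

lemma disjt_add {x y z : X} (hx : disjt x z) (hy : disjt y z) : disjt (x + y) z := by
  refine disjt_of_inf_le_zero ?_
  calc |x + y| ⊓ |z| ≤ (|x| + |y|) ⊓ |z| := inf_le_inf_right _ (abs_add_le x y)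
    _ ≤ |x| ⊓ |z| + |y| ⊓ |z| := add_inf_le_inf_add_inf (abs_nonneg x) (abs_nonneg y) (abs_nonneg z)
    _ = 0 := by rw [hx, hy, add_zero]

lemma zero_mem_dComp (S : Set X) : (0 : X) ∈ dComp S :=
  fun y _ => by rw [disjt, abs_zero, inf_eq_left]; exact abs_nonneg y

lemma add_mem_dComp {S : Set X} {x y : X} (hx : x ∈ dComp S) (hy : y ∈ dComp S) :
    x + y ∈ dComp S :=
  fun w hw => disjt_add (hx w hw) (hy w hw)

lemma sub_mem_dComp {S : Set X} {x y : X} (hx : x ∈ dComp S) (hy : y ∈ dComp S) :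
    x - y ∈ dComp S :=
  sub_eq_add_neg x y ▸ add_mem_dComp hx (neg_mem_dComp hy)

lemma IsBand.zero_mem {B : Set X} (hB : IsBand B) : (0 : X) ∈ B := by
  obtain ⟨S, rfl⟩ := hB
  exact zero_mem_dComp S

lemma IsBand.mem_of_abs_le {B : Set X} (hB : IsBand B) {x y : X} (hy : y ∈ B) (h : |x| ≤ |y|) :
    x ∈ B := by
  obtain ⟨S, rfl⟩ := hB
  exact fun w hw => disjt_of_abs_le h (hy w hw)

lemma exists_isProjBand_subset_notMem_dComp (hcof : CofinalProjBands X) {B : Set X}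
    (hB : IsBand B) {x : X} (hx : x ∉ dComp B) :
    ∃ B' : Set X, IsProjBand B' ∧ B' ⊆ B ∧ x ∉ dComp B' := by
  obtain ⟨y, hyB, hxy⟩ : ∃ y ∈ B, ¬ disjt x y := by simpa [dComp] using hx
  set u := |x| ⊓ |y|
  have hu : |u| = u := abs_of_nonneg (le_inf (abs_nonneg x) (abs_nonneg y))
  have huB : u ∈ B := hB.mem_of_abs_le hyB (by rw [hu]; exact inf_le_right)
  have hu_ne : dComp (dComp {u}) ≠ {0} := fun h => by
    have hu0 : u ∈ ({0} : Set X) := h ▸ mem_dComp_dComp_self u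
    exact hxy hu0
  obtain ⟨B', hB', hB'_ne, hB'u⟩ := hcof _ ⟨_, rfl⟩ hu_ne
  refine ⟨B', hB', hB'u.trans (dComp_dComp_subset hB (Set.singleton_subset_iff.2 huB)),
    fun hxB' => hB'_ne (Set.eq_singleton_iff_unique_mem.2 ⟨hB'.1.zero_mem, fun w hw => ?_⟩)⟩
  have huB' : u ∈ dComp B' := fun v hv =>
    disjt_of_abs_le (by rw [hu]; exact inf_le_left) (hxB' v hv)
  refine eq_zero_of_mem_of_mem_dComp ?_ (hB'u hw)
  rintro v rfl
  exact disjt_comm.1 (huB' w hw)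

end Disjointness

section BandProjection

variable {X : Type*} [Lattice X] [AddCommGroup X] [CovariantClass X X (· + ·) (· ≤ ·)]
  [Module ℝ X]

lemma IsBandProjOnto.map_eq_zero_iff {B : Set X} {P : X →ₗ[ℝ] X} (hP : IsBandProjOnto B P)
    {x : X} : P x = 0 ↔ x ∈ dComp B := by
  constructor
  · intro h
    simpa [h] using (hP.2 x).2
  · intro hx
    refine eq_zero_of_mem_of_mem_dComp (hP.2 x).1 ?_
    simpa using sub_mem_dComp hx (hP.2 x).2

lemma dIndepFam.dIndepProjFam {ι : Type*} {f : ι → X} (hf : dIndepFam f) :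
    dIndepProjFam f := by
  classical
  intro B P hP t c hsum j hj hPj
  by_contra hcj
  have hmem : ∑ i ∈ t with c i ≠ 0, c i • f i ∈ dComp B := by
    rw [← hP.map_eq_zero_iff, map_sum]
    simp_rw [map_smul]
    rw [Finset.sum_filter_of_ne fun i _ hi => left_ne_zero_of_smul hi, hsum]
  exact hPj <| hP.map_eq_zero_iff.2 <|
    hf B hP.1.1 _ c (fun i hi => (Finset.mem_filter.1 hi).2) hmem j (Finset.mem_filter.2 ⟨hj, hcj⟩)

variable [PosSMulMono ℝ X]

lemma disjt_smul {x z : X} (c : ℝ) (h : disjt x z) : disjt (c • x) z := by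
  have hr : (0 : ℝ) < |c| + 1 := by positivity
  refine disjt_of_inf_le_zero ?_
  calc |c • x| ⊓ |z| ≤ (|c| • |x| + |x|) ⊓ (|c| • |z| + |z|) :=
        inf_le_inf ((abs_smul_le c x).trans (le_add_of_nonneg_right (abs_nonneg x)))
          (le_add_of_nonneg_left (smul_nonneg (abs_nonneg c) (abs_nonneg z)))
    _ = ((|c| + 1) • |x|) ⊓ ((|c| + 1) • |z|) := by simp only [add_smul, one_smul]
    _ = (|c| + 1) • (|x| ⊓ |z|) := ((OrderIso.smulRight hr).map_inf _ _).symm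
    _ = 0 := by rw [h, smul_zero]

def dCompSubmodule (S : Set X) : Submodule ℝ X where
  carrier := dComp S
  add_mem' := add_mem_dComp
  zero_mem' := zero_mem_dComp S
  smul_mem' c _ hx := fun w hw => disjt_smul c (hx w hw)

lemma IsProjBand.exists_isBandProjOnto {B : Set X} (hB : IsProjBand B) :
    ∃ P : X →ₗ[ℝ] X, IsBandProjOnto B P := by
  obtain ⟨⟨S, rfl⟩, hdecomp⟩ := hB
  have hcompl : IsCompl (dCompSubmodule S) (dCompSubmodule (dComp S)) := by
    refine ⟨Submodule.disjoint_def.2 fun x hx hx' => eq_zero_of_mem_of_mem_dComp hx hx', ?_⟩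
    refine Submodule.codisjoint_iff_exists_add_eq.2 fun x => ?_
    obtain ⟨b, hb, c, hc, rfl⟩ := hdecomp x
    exact ⟨b, c, hb, hc, rfl⟩
  exact ⟨_, ⟨⟨⟨S, rfl⟩, hdecomp⟩, fun x =>
    ⟨Submodule.projection_apply_mem hcompl x, Submodule.sub_projection_mem hcompl x⟩⟩⟩

lemma dIndepProjFam.dIndepFam (hcof : CofinalProjBands X) {ι : Type*} {f : ι → X}
    (hf : dIndepProjFam f) : dIndepFam f := by
  intro B hB t c hc hsum j hj
  by_contra hjB
  obtain ⟨B', hB', hB'B, hjB'⟩ := exists_isProjBand_subset_notMem_dComp hcof hB hjB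
  obtain ⟨P, hP⟩ := hB'.exists_isBandProjOnto
  refine hc j hj (hf B' P hP t c ?_ j hj (mt hP.map_eq_zero_iff.1 hjB'))
  simpa using hP.map_eq_zero_iff.2 (dComp_antitone hB'B hsum)

end BandProjection

/-- In a vector lattice with a cofinal family of projection bands,
band-free d-independence coincides with projection-band d-independence. -/
theorem dIndep_band_free_iff_proj_sense
    {X : Type*} [Lattice X] [AddCommGroup X] [Module ℝ X]
    [CovariantClass X X (· + ·) (· ≤ ·)] [PosSMulMono ℝ X]
    (hcof : CofinalProjBands X) (s : Set X) :
    dIndepSet s ↔ dIndepProjSet s :=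
  ⟨dIndepFam.dIndepProjFam, dIndepProjFam.dIndepFam hcof⟩
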